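/- arXiv:2007.12018 — 3 statements merged into one kernel-verified Lean document; each statement's English description precedes it below -/
import Mathlib

section
/- Let k be a field of characteristic 2. The cubic forms F₁ = x₁²x₄ + x₂³ + x₁x₃², F₂ = x₁²x₄ + x₂²x₃ + x₁x₃², F₃ = x₁²x₄ + x₂³ + x₃³ in k[x₁,x₂,x₃,x₄] are pairwise projectively inequivalent: there is no invertible linear change of coordinates carrying any one of them to another (even up to nonzero scalar). -/
/-!
In characteristic 2 each of the three forms is a sum of terms `x_p² x_q`, and a linear substitution
`g` sends `x_p² x_q` to `ℓ_p² ℓ_q` with `ℓ_p² = ∑ g_{pt}² x_t²` (Frobenius), so the coefficient of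
`x_t² x_u` in the image is `∑ g_{pt}² g_{qu}`, free of cross terms. No target form contains a monomial
`x₄² x_u`; by invertibility of `g` this forces `x₁, x₂, x₃` to be sent into `⟨x₁, x₂, x₃⟩` (the
singular point `(0:0:0:1)` is fixed), and the coefficients of `x_t² x₄` then show that `x₁` is sent to
a multiple of itself. Modulo `x₁` what remains are the binary cubics `x₂³`, `x₂²x₃`, `x₂³ + x₃³`,
whose coefficients of `x₂³`, `x₂²x₃`, `x₃³` are incompatible. As projective equivalence is
symmetric, only the three pairs `i < j` need to be excluded.
-/

open MvPolynomial

namespace CubicNormalForms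

section Substitution

variable {σ R : Type*} [Fintype σ] [CommSemiring R]

noncomputable def linSubst (g : Matrix σ σ R) : MvPolynomial σ R →ₐ[R] MvPolynomial σ R :=
  aeval fun s => ∑ t, C (g s t) * X t

theorem linSubst_comp_linSubst [DecidableEq σ] (g h : Matrix σ σ R) :
    (linSubst h).comp (linSubst g) = linSubst (g * h) := by
  refine algHom_ext fun s => ?_
  simp only [linSubst, AlgHom.comp_apply, aeval_X, map_sum, map_mul, aeval_C,
    algebraMap_eq, Matrix.mul_apply, Finset.mul_sum, Finset.sum_mul, mul_assoc]
  exact Finset.sum_comm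

theorem linSubst_one [DecidableEq σ] : linSubst (1 : Matrix σ σ R) = AlgHom.id R _ := by
  refine algHom_ext fun s => ?_
  simp [linSubst, Matrix.one_apply]

end Substitution

section ProjEquiv

variable {σ k : Type*} [Fintype σ] [DecidableEq σ] [Field k]

def ProjEquiv (F G : MvPolynomial σ k) : Prop :=
  ∃ (g : Matrix σ σ k) (c : k), IsUnit g.det ∧ c ≠ 0 ∧ linSubst g F = C c * G

theorem ProjEquiv.symm {F G : MvPolynomial σ k} (h : ProjEquiv F G) : ProjEquiv G F := by
  obtain ⟨g, c, hg, hc, hFG⟩ := h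
  refine ⟨g⁻¹, c⁻¹, Matrix.isUnit_nonsing_inv_det g hg, inv_ne_zero hc, ?_⟩
  have hF : F = C c * linSubst g⁻¹ G := by
    have := congrArg (linSubst g⁻¹) hFG
    rwa [← AlgHom.comp_apply, linSubst_comp_linSubst, Matrix.mul_nonsing_inv g hg,
      linSubst_one, AlgHom.id_apply, map_mul, algHom_C, algebraMap_eq] at this
  rw [hF, ← mul_assoc, ← C_mul, inv_mul_cancel₀ hc, C_1, one_mul]

end ProjEquiv

section SquareTimesLinear

variable {σ R : Type*}

noncomputable def sqMulExp (t u : σ) : σ →₀ ℕ := Finsupp.single t 2 + Finsupp.single u 1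

theorem sqMulExp_inj {t u t' u' : σ} : sqMulExp t u = sqMulExp t' u' ↔ (t, u) = (t', u') := by
  classical
  refine ⟨fun h => ?_, fun h => by simp_all⟩
  unfold sqMulExp at h
  have ht : t = t' := by
    by_contra hne
    have := DFunLike.congr_fun h t
    simp only [Finsupp.add_apply, Finsupp.single_apply, if_neg (Ne.symm hne)] at this
    split_ifs at this <;> omega
  subst ht
  rw [(Finsupp.single_left_inj one_ne_zero).1 (add_left_cancel h)]

variable [CommSemiring R]

theorem X_sq_mul_X (t u : σ) : (X t ^ 2 * X u : MvPolynomial σ R) = monomial (sqMulExp t u) 1 := by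
  rw [X_pow_eq_monomial, X, monomial_mul, one_mul, sqMulExp]

noncomputable def sqMulForm (M : Finset (σ × σ)) : MvPolynomial σ R :=
  ∑ p ∈ M, X p.1 ^ 2 * X p.2

variable [DecidableEq σ]

theorem coeff_sqMulForm (M : Finset (σ × σ)) (t u : σ) :
    coeff (sqMulExp t u) (sqMulForm M : MvPolynomial σ R) = if (t, u) ∈ M then 1 else 0 := by
  simp only [sqMulForm, coeff_sum, X_sq_mul_X, coeff_monomial, sqMulExp_inj, Prod.mk.eta]
  exact Finset.sum_ite_eq' M (t, u) _

variable [Fintype σ] [CharP R 2]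

theorem coeff_sq_mul_linear (a b : σ → R) (t u : σ) :
    coeff (sqMulExp t u) ((∑ s, C (a s) * X s) ^ 2 * ∑ s, C (b s) * X s) = a t ^ 2 * b u := by
  have : ((∑ s, C (a s) * X s) ^ 2 * ∑ s, C (b s) * X s : MvPolynomial σ R) =
      ∑ p : σ × σ, monomial (sqMulExp p.1 p.2) (a p.1 ^ 2 * b p.2) := by
    rw [CharTwo.sum_sq, Finset.sum_mul_sum, ← Finset.univ_product_univ, Finset.sum_product]
    refine Finset.sum_congr rfl fun s _ => Finset.sum_congr rfl fun s' _ => ?_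
    calc (C (a s) * X s) ^ 2 * (C (b s') * X s') = C (a s ^ 2 * b s') * (X s ^ 2 * X s') := by
          rw [C_mul, C_pow]; ring
      _ = _ := by rw [X_sq_mul_X, C_mul_monomial, mul_one]
  rw [this, coeff_sum]
  simp only [coeff_monomial, sqMulExp_inj, Prod.mk.eta]
  exact Fintype.sum_ite_eq' (t, u) _

theorem coeff_linSubst_sqMulForm (g : Matrix σ σ R) (M : Finset (σ × σ)) (t u : σ) :
    coeff (sqMulExp t u) (linSubst g (sqMulForm M)) = ∑ p ∈ M, g p.1 t ^ 2 * g p.2 u := by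
  simp only [sqMulForm, map_sum, map_mul, map_pow, linSubst, aeval_X, coeff_sum]
  exact Finset.sum_congr rfl fun p _ => coeff_sq_mul_linear _ _ t u

theorem sum_sq_mul_eq_of_linSubst_eq {g : Matrix σ σ R} {c : R}
    {M N : Finset (σ × σ)} (h : linSubst g (sqMulForm M) = C c * sqMulForm N) (t u : σ) :
    ∑ p ∈ M, g p.1 t ^ 2 * g p.2 u = if (t, u) ∈ N then c else 0 := by
  have := congrArg (coeff (sqMulExp t u)) h
  rwa [coeff_linSubst_sqMulForm, coeff_C_mul, coeff_sqMulForm, mul_ite, mul_one, mul_zero] at this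

end SquareTimesLinear

section InvertibleMatrix

variable {σ k : Type*} [Fintype σ] [DecidableEq σ] [Field k]

theorem eq_zero_of_sum_mul_eq_zero {g : Matrix σ σ k} (hg : IsUnit g.det) {M : Finset (σ × σ)}
    (hM : (M : Set (σ × σ)).InjOn Prod.snd) {w : σ → k}
    (h : ∀ u, ∑ p ∈ M, w p.1 * g p.2 u = 0) : ∀ p ∈ M, w p.1 = 0 := by
  set v : σ → k := fun q => ∑ p ∈ M with p.2 = q, w p.1
  have hvg : Matrix.vecMul v g = 0 := by
    ext u
    rw [Pi.zero_apply, ← h u, ← Finset.sum_fiberwise M Prod.snd]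
    refine Finset.sum_congr rfl fun q _ => ?_
    rw [Finset.sum_mul]
    exact Finset.sum_congr rfl fun p hp => by rw [(Finset.mem_filter.1 hp).2]
  have hv : v = 0 := Matrix.vecMul_injective_iff_isUnit.2 ((Matrix.isUnit_iff_isUnit_det g).2 hg)
    (hvg.trans (Matrix.zero_vecMul g).symm)
  intro p hp
  calc w p.1 = v p.2 := by
        symm
        refine Finset.sum_eq_single_of_mem p (Finset.mem_filter.2 ⟨hp, rfl⟩) fun p' hp' hne => ?_
        obtain ⟨hp'M, hsnd⟩ := Finset.mem_filter.1 hp'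
        exact absurd (hM hp'M hp hsnd) hne
    _ = 0 := congrFun hv p.2

end InvertibleMatrix

section NormalForms

variable {k : Type*} [Field k] [CharP k 2]

/-- `(p, q)` stands for the monomial `x_p² x_q`; variables are indexed from `0`, so `X 0, …, X 3`
are the `x₁, …, x₄` of the forms. -/
def normalFormTerms : Fin 3 → Finset (Fin 4 × Fin 4) :=
  ![{(0, 3), (1, 1), (2, 0)}, {(0, 3), (1, 2), (2, 0)}, {(0, 3), (1, 1), (2, 2)}]

theorem col_three_eq_zero_of_linSubst_eq {g : Matrix (Fin 4) (Fin 4) k} {c : k}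
    (hg : IsUnit g.det) {i j : Fin 3}
    (h : linSubst g (sqMulForm (normalFormTerms i)) = C c * sqMulForm (normalFormTerms j)) :
    ∀ p ≠ 3, g p 3 = 0 := by
  have hinj : ∀ p ∈ normalFormTerms i, ∀ p' ∈ normalFormTerms i, p.2 = p'.2 → p = p' := by
    fin_cases i <;> decide
  have hfree : ∀ u, (3, u) ∉ normalFormTerms j := by fin_cases j <;> decide
  have hfst : ∀ p ≠ 3, ∃ q, (p, q) ∈ normalFormTerms i := by fin_cases i <;> decide
  have hsq := eq_zero_of_sum_mul_eq_zero (w := fun p => g p 3 ^ 2) hg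
    (fun p hp p' hp' => hinj p hp p' hp') fun u => by
      rw [sum_sq_mul_eq_of_linSubst_eq h, if_neg (hfree u)]
  intro p hp
  obtain ⟨q, hq⟩ := hfst p hp
  exact pow_eq_zero_iff two_ne_zero |>.1 (hsq _ hq)

theorem row_zero_eq_zero_of_linSubst_eq {g : Matrix (Fin 4) (Fin 4) k} {c : k}
    (hg : IsUnit g.det) (hc : c ≠ 0) {i j : Fin 3}
    (h : linSubst g (sqMulForm (normalFormTerms i)) = C c * sqMulForm (normalFormTerms j)) :
    ∀ t ≠ 0, g 0 t = 0 := by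
  have hcol := col_three_eq_zero_of_linSubst_eq hg h
  have hmem : ((0 : Fin 4), (3 : Fin 4)) ∈ normalFormTerms i := by fin_cases i <;> decide
  have hsnd : ∀ p ∈ normalFormTerms i, p ≠ (0, 3) → p.2 ≠ 3 := by fin_cases i <;> decide
  have hrhs : ∀ t, (t, 3) ∈ normalFormTerms j ↔ t = 0 := by fin_cases j <;> decide
  have hcorner (t : Fin 4) : g 0 t ^ 2 * g 3 3 = if t = 0 then c else 0 :=
    calc g 0 t ^ 2 * g 3 3 = ∑ p ∈ normalFormTerms i, g p.1 t ^ 2 * g p.2 3 := by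
          symm
          exact Finset.sum_eq_single_of_mem _ hmem fun p hp hne => by
            rw [hcol _ (hsnd p hp hne), mul_zero]
      _ = _ := by simp only [sum_sq_mul_eq_of_linSubst_eq h, hrhs]
  have h33 : g 3 3 ≠ 0 := fun h33 => hc (by simpa [h33] using (hcorner 0).symm)
  intro t ht
  simpa [ht, h33] using hcorner t

theorem not_linSubst_eq_of_lt {g : Matrix (Fin 4) (Fin 4) k} {c : k} (hc : c ≠ 0) {i j : Fin 3}
    (hij : i < j) (hrow : ∀ t ≠ 0, g 0 t = 0)
    (h : linSubst g (sqMulForm (normalFormTerms i)) = C c * sqMulForm (normalFormTerms j)) :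
    False := by
  have hcoeff := sum_sq_mul_eq_of_linSubst_eq h
  have hpairs : ∀ i j : Fin 3, i < j → (i = 0 ∧ j = 1) ∨ (i = 0 ∧ j = 2) ∨ (i = 1 ∧ j = 2) := by
    decide
  obtain ⟨rfl, rfl⟩ | ⟨rfl, rfl⟩ | ⟨rfl, rfl⟩ := hpairs i j hij
  · have e11 : g 1 1 ^ 2 * g 1 1 = 0 := by simpa [normalFormTerms, hrow] using hcoeff 1 1
    have e12 : g 1 1 ^ 2 * g 1 2 = c := by simpa [normalFormTerms, hrow] using hcoeff 1 2
    have h11 : g 1 1 = 0 := by simpa using e11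
    exact hc (by simpa [h11] using e12.symm)
  · have e11 : g 1 1 ^ 2 * g 1 1 = c := by simpa [normalFormTerms, hrow] using hcoeff 1 1
    have e12 : g 1 1 ^ 2 * g 1 2 = 0 := by simpa [normalFormTerms, hrow] using hcoeff 1 2
    have e22 : g 1 2 ^ 2 * g 1 2 = c := by simpa [normalFormTerms, hrow] using hcoeff 2 2
    have h11 : g 1 1 ≠ 0 := fun h0 => hc (by simpa [h0] using e11.symm)
    have h12 : g 1 2 = 0 := by simpa [h11] using e12
    exact hc (by simpa [h12] using e22.symm)
  · have e11 : g 1 1 ^ 2 * g 2 1 = c := by simpa [normalFormTerms, hrow] using hcoeff 1 1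
    have e12 : g 1 1 ^ 2 * g 2 2 = 0 := by simpa [normalFormTerms, hrow] using hcoeff 1 2
    have e22 : g 1 2 ^ 2 * g 2 2 = c := by simpa [normalFormTerms, hrow] using hcoeff 2 2
    have h11 : g 1 1 ≠ 0 := fun h0 => hc (by simpa [h0] using e11.symm)
    have h22 : g 2 2 = 0 := by simpa [h11] using e12
    exact hc (by simpa [h22] using e22.symm)

end NormalForms

end CubicNormalForms

open CubicNormalForms

/-- in characteristic 2, the cubic forms
`F₁ = x₁²x₄+x₂³+x₁x₃²`, `F₂ = x₁²x₄+x₂²x₃+x₁x₃²`, `F₃ = x₁²x₄+x₂³+x₃³` are pairwise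
projectively inequivalent: no invertible linear substitution carries one to a nonzero
scalar multiple of another. -/
theorem three_normal_forms_pairwise_inequivalent
    (k : Type*) [Field k] [CharP k 2]
    (F : Fin 3 → MvPolynomial (Fin 4) k)
    (hF0 : F 0 = X 0 ^ 2 * X 3 + X 1 ^ 3 + X 0 * X 2 ^ 2)
    (hF1 : F 1 = X 0 ^ 2 * X 3 + X 1 ^ 2 * X 2 + X 0 * X 2 ^ 2)
    (hF2 : F 2 = X 0 ^ 2 * X 3 + X 1 ^ 3 + X 2 ^ 3) :
    ∀ i j : Fin 3, i ≠ j →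
      ¬ ∃ (g : Matrix (Fin 4) (Fin 4) k) (c : k), IsUnit g.det ∧ c ≠ 0 ∧
        aeval (fun s => ∑ t, C (g s t) * X t) (F i) = C c * F j := by
  have hF : ∀ i, F i = sqMulForm (normalFormTerms i) := by
    intro i
    fin_cases i <;>
      simp only [Fin.zero_eta, Fin.mk_one, Fin.reduceFinMk, Fin.isValue, hF0, hF1, hF2, sqMulForm,
        normalFormTerms, Matrix.cons_val_zero, Matrix.cons_val_one, Matrix.cons_val,
        Finset.mem_insert, Finset.mem_singleton, Prod.mk.injEq, zero_ne_one, one_ne_zero,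
        Fin.reduceEq, and_self, or_self, not_false_eq_true, Finset.sum_insert,
        Finset.sum_singleton] <;>
      ring
  have hlt : ∀ i j : Fin 3, i < j → ¬ ProjEquiv (F i) (F j) := by
    rintro i j hij ⟨g, c, hg, hc, h⟩
    rw [hF, hF] at h
    exact not_linSubst_eq_of_lt hc hij (row_zero_eq_zero_of_linSubst_eq hg hc h) h
  intro i j hij hequiv
  rcases hij.lt_or_gt with hij | hji
  · exact hlt i j hij hequiv
  · exact hlt j i hji (ProjEquiv.symm hequiv)
end

section
/- Let k be a field of characteristic 2, let f = x²L₁ + y²L₂ + z²L₃ ∈ k[x,y,z] with coefficient matrix A of rank 3 (i.e., L₁, L₂, L₃ linearly independent). Then the projective plane curve {f = 0} is smooth. Conversely, if rank(A) ≤ 2, the curve defined by f is singular. -/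
/-!
In characteristic 2 the squares `X i ^ 2` have zero partial derivatives, so the gradient of
`f = ∑ X i ^ 2 * (A i ⬝ᵥ X)` at `v` is the row vector `v ^ 2 ᵥ* A`, and Euler's identity takes
the form `f v = (v ^ 2 ᵥ* A) ⬝ᵥ v`; hence every common zero of the partials lies on the curve.
Squaring is injective on a reduced ring and, over a perfect field, surjective, so singular
points correspond to nonzero vectors of the left kernel of `A`, which exist iff `A.det = 0`.
-/

open MvPolynomial Matrix

theorem Matrix.rank_eq_card_iff_det_ne_zero {K n : Type*} [Field K] [Fintype n] [DecidableEq n]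
    (A : Matrix n n K) : A.rank = Fintype.card n ↔ A.det ≠ 0 := by
  refine ⟨fun h => ?_, rank_of_det_ne_zero⟩
  have hrange : LinearMap.range A.mulVecLin = ⊤ :=
    Submodule.eq_top_of_finrank_eq (by rw [← Matrix.rank, h, Module.finrank_fintype_fun_eq_card])
  have hunit : IsUnit A := mulVec_surjective_iff_isUnit.1 (LinearMap.range_eq_top.1 hrange)
  exact ((isUnit_iff_isUnit_det A).1 hunit).ne_zero

theorem Pi.exists_pow_eq_of_perfectRing {R σ : Type*} [CommSemiring R] (p : ℕ) [ExpChar R p]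
    [PerfectRing R p] (w : σ → R) : ∃ v : σ → R, v ^ p = w :=
  ⟨fun i => (frobeniusEquiv R p).symm (w i), funext fun i => frobeniusEquiv_symm_pow_p R p (w i)⟩

namespace MvPolynomial

variable {R σ : Type*} [CommRing R]

theorem pderiv_X_sq [CharP R 2] (i j : σ) : pderiv j (X i ^ 2 : MvPolynomial σ R) = 0 := by
  rw [pderiv_pow, Nat.cast_ofNat, CharTwo.two_eq_zero, zero_mul, zero_mul]

variable [Fintype σ]

noncomputable def linearForm (a : σ → R) : MvPolynomial σ R := ∑ j, C (a j) * X j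

@[simp] theorem eval_linearForm (a v : σ → R) : eval v (linearForm a) = a ⬝ᵥ v := by
  simp [linearForm, dotProduct]

@[simp] theorem pderiv_linearForm (a : σ → R) (j : σ) : pderiv j (linearForm a) = C (a j) := by
  classical
  simp [linearForm, pderiv_X, Pi.single_apply]

noncomputable def sumXSqMulLinearForm (A : Matrix σ σ R) : MvPolynomial σ R :=
  ∑ i, X i ^ 2 * linearForm (A i)

theorem eval_sumXSqMulLinearForm (A : Matrix σ σ R) (v : σ → R) :
    eval v (sumXSqMulLinearForm A) = (v ^ 2 ᵥ* A) ⬝ᵥ v := by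
  rw [← dotProduct_mulVec]
  simp [sumXSqMulLinearForm, dotProduct, mulVec]

theorem eval_pderiv_sumXSqMulLinearForm [CharP R 2] (A : Matrix σ σ R) (v : σ → R) (j : σ) :
    eval v (pderiv j (sumXSqMulLinearForm A)) = (v ^ 2 ᵥ* A) j := by
  simp only [sumXSqMulLinearForm, map_sum, pderiv_mul, pderiv_X_sq, zero_mul, zero_add,
    pderiv_linearForm]
  simp [vecMul, dotProduct, mul_comm]

theorem eval_pderiv_sumXSqMulLinearForm_eq_zero_iff [CharP R 2] (A : Matrix σ σ R)
    (v : σ → R) : (∀ j, eval v (pderiv j (sumXSqMulLinearForm A)) = 0) ↔ v ^ 2 ᵥ* A = 0 := by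
  simp only [eval_pderiv_sumXSqMulLinearForm]
  exact ⟨_root_.funext, congrFun⟩

end MvPolynomial

/-- for `f = x²L₁+y²L₂+z²L₃` over a perfect field of characteristic 2
with coefficient matrix A: if `rank A = 3` the projective curve `{f = 0}` is smooth
(the partials have no common nonzero zero), and if `rank A ≤ 2` it is singular. -/
theorem ternary_cubic_smooth_iff_rank_three
    (k : Type*) [Field k] [ExpChar k 2] [PerfectRing k 2]
    (A : Matrix (Fin 3) (Fin 3) k) (L : Fin 3 → MvPolynomial (Fin 3) k)
    (hL : ∀ i, L i = ∑ j, C (A i j) * X j)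
    (f : MvPolynomial (Fin 3) k) (hf : f = ∑ i, X i ^ 2 * L i) :
    (A.rank = 3 → ∀ v : Fin 3 → k, (∀ j, eval v (pderiv j f) = 0) → v = 0) ∧
    (A.rank ≤ 2 → ∃ v : Fin 3 → k, v ≠ 0 ∧ eval v f = 0 ∧
      ∀ j, eval v (pderiv j f) = 0) := by
  have : CharP k 2 := by obtain _ | ⟨-⟩ := ‹ExpChar k 2›; assumption
  obtain rfl : f = sumXSqMulLinearForm A := by rw [hf, funext hL]; rfl
  refine ⟨fun hrank v hv => ?_, fun hrank => ?_⟩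
  · have hdet : A.det ≠ 0 := A.rank_eq_card_iff_det_ne_zero.1 (by simpa using hrank)
    have hsq : v ^ 2 = 0 := by
      by_contra hne
      exact hdet <| exists_vecMul_eq_zero_iff.1
        ⟨_, hne, (eval_pderiv_sumXSqMulLinearForm_eq_zero_iff A v).1 hv⟩
    exact IsNilpotent.eq_zero ⟨2, hsq⟩
  · have hdet : A.det = 0 := by
      by_contra hne
      have := A.rank_eq_card_iff_det_ne_zero.2 hne
      simp only [Fintype.card_fin] at this
      omega
    obtain ⟨w, hw0, hw⟩ := exists_vecMul_eq_zero_iff.2 hdet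
    obtain ⟨v, rfl⟩ := Pi.exists_pow_eq_of_perfectRing 2 w
    refine ⟨v, ?_, ?_, (eval_pderiv_sumXSqMulLinearForm_eq_zero_iff A v).2 hw⟩
    · rintro rfl
      exact hw0 (zero_pow two_ne_zero)
    · rw [eval_sumXSqMulLinearForm, hw, zero_dotProduct]
end

section
/- Let k be an algebraically closed field of characteristic 2 and let f = x₁²L₁ + x₂²L₂ + x₃²L₃ + x₄²L₄ ∈ k[x₁,x₂,x₃,x₄] where the coefficient matrix A has rank 2. Then there exist linearly independent linear forms M₁, M₂ and linear forms N₁, N₂ such that f = M₁²N₁ + M₂²N₂. If moreover {M₁,M₂,N₁,N₂} are linearly independent, then f is linearly equivalent to x₁²x₃ + x₂²x₄. -/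
/-!
Squaring is additive in characteristic 2. Factor the coefficient matrix through its row space,
`A = D * E` with `D` of `r = rank A` independent columns; then `∑ xᵢ² Lᵢ = ∑ⱼ Mⱼ² Nⱼ`, where
`Nⱼ` is the linear form of the `j`-th row of `E` and `Mⱼ = ∑ᵢ √(D i j) xᵢ`. The `Mⱼ` are
independent because squaring a linear relation among them yields one among the columns of `D`.
Conversely, independent linear forms `M₁, M₂, N₁, N₂` are the rows of an invertible matrix `B`,
and the substitution given by `B⁻¹` sends them to `x₁, x₂, x₃, x₄`.
-/

open MvPolynomial
open scoped Matrix

theorem LinearIndependent.of_sq {ι σ K : Type*} [CommRing K] [IsReduced K] [CharP K 2]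
    {v : ι → σ → K} (h : LinearIndependent K (v ^ 2)) : LinearIndependent K v := by
  rw [linearIndependent_iff'] at h ⊢
  intro s g hg i hi
  refine IsReduced.eq_zero _ ⟨2, h s (g ^ 2) (_root_.funext fun x => ?_) i hi⟩
  calc (∑ i ∈ s, (g ^ 2) i • (v ^ 2) i) x = (∑ i ∈ s, (g i • v i) x) ^ 2 := by
        simp only [Finset.sum_apply, CharTwo.sum_sq, Pi.smul_apply, Pi.pow_apply, smul_eq_mul,
          mul_pow]
    _ = 0 := by rw [← Finset.sum_apply, hg, Pi.zero_apply, zero_pow two_ne_zero]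

namespace Matrix

variable {m n R : Type*} [Fintype n] [CommSemiring R]

theorem toMvPolynomial_eq_sum_C_mul_X (M : Matrix m n R) (i : m) :
    M.toMvPolynomial i = ∑ j, C (M i j) * X j := by
  simp only [toMvPolynomial, C_mul_X_eq_monomial]

theorem toMvPolynomial_eq_linearCombination (M : Matrix m n R) (i : m) :
    M.toMvPolynomial i = Fintype.linearCombination R X (M.row i) := by
  simp only [toMvPolynomial_eq_sum_C_mul_X, Fintype.linearCombination_apply, smul_eq_C_mul, row]

theorem linearIndependent_toMvPolynomial_iff {K : Type*} [CommRing K] {M : Matrix m n K} :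
    LinearIndependent K M.toMvPolynomial ↔ LinearIndependent K M.row := by
  nontriviality K
  have hφ : LinearMap.ker (Fintype.linearCombination K (X : n → MvPolynomial n K)) = ⊥ :=
    LinearMap.ker_eq_bot.mpr (linearIndependent_X n K).fintypeLinearCombination_injective
  have hM : M.toMvPolynomial = Fintype.linearCombination K X ∘ M.row :=
    _root_.funext (toMvPolynomial_eq_linearCombination M)
  rw [hM]
  exact LinearMap.linearIndependent_iff _ hφ

theorem exists_toMvPolynomial_eq {P : m → MvPolynomial n R} (hP : ∀ i, (P i).IsHomogeneous 1) :
    ∃ M : Matrix m n R, M.toMvPolynomial = P := by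
  have hspan (i : m) : P i ∈ Submodule.span R (Set.range X) := by
    rw [← homogeneousSubmodule_one_eq_span_X, mem_homogeneousSubmodule]
    exact hP i
  choose c hc using fun i => (Submodule.mem_span_range_iff_exists_fun R).mp (hspan i)
  exact ⟨of c, _root_.funext fun i => by
    rw [toMvPolynomial_eq_linearCombination, Fintype.linearCombination_apply]; exact hc i⟩

theorem exists_mul_eq_of_rank_eq {K : Type*} [Fintype m] [Field K]
    (A : Matrix m n K) {r : ℕ} (hA : A.rank = r) :
    ∃ (D : Matrix m (Fin r) K) (E : Matrix (Fin r) n K),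
      A = D * E ∧ LinearIndependent K D.col := by
  let b := Module.finBasisOfFinrankEq K _ (A.rank_eq_finrank_span_row.symm.trans hA)
  let D : Matrix m (Fin r) K := of fun i => b.repr ⟨A i, Submodule.subset_span ⟨i, rfl⟩⟩
  let E : Matrix (Fin r) n K := of fun j => (b j : n → K)
  have hDE : A = D * E := by
    ext i l
    have h := congrArg Subtype.val (b.sum_repr ⟨A i, Submodule.subset_span ⟨i, rfl⟩⟩)
    simp only [Submodule.coe_sum, Submodule.coe_smul] at h
    rw [← h]
    simp [mul_apply, D, E]
  refine ⟨D, E, hDE, ?_⟩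
  rw [linearIndependent_iff_card_eq_finrank_span, Fintype.card_fin, Set.finrank,
    ← rank_eq_finrank_span_cols]
  have hle := rank_mul_le_left D E
  rw [← hDE, hA] at hle
  exact le_antisymm hle ((rank_le_card_width D).trans_eq (Fintype.card_fin r))

theorem sum_X_sq_mul_toMvPolynomial_mul [Fintype m] [CharP R 2] (S : Matrix n m R)
    (E : Matrix m n R) :
    ∑ i, X i ^ 2 * (S.map (· ^ 2) * E).toMvPolynomial i =
      ∑ j, Sᵀ.toMvPolynomial j ^ 2 * E.toMvPolynomial j := by
  simp only [toMvPolynomial_mul, toMvPolynomial_eq_sum_C_mul_X (S.map _), map_sum, map_mul,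
    bind₁_C_right, bind₁_X_right, toMvPolynomial_eq_sum_C_mul_X Sᵀ, CharTwo.sum_sq,
    Finset.mul_sum, Finset.sum_mul, map_apply, transpose_apply, map_pow]
  rw [Finset.sum_comm]
  exact Finset.sum_congr rfl fun j _ => Finset.sum_congr rfl fun i _ => by ring

theorem exists_linearIndependent_sq_mul_of_rank_eq {K : Type*} [Field K] [CharP K 2]
    [PerfectRing K 2] (A : Matrix n n K) {r : ℕ} (hA : A.rank = r) :
    ∃ M N : Fin r → MvPolynomial n K, (∀ j, (M j).IsHomogeneous 1) ∧
      (∀ j, (N j).IsHomogeneous 1) ∧ LinearIndependent K M ∧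
      ∑ i, X i ^ 2 * A.toMvPolynomial i = ∑ j, M j ^ 2 * N j := by
  obtain ⟨D, E, rfl, hD⟩ := A.exists_mul_eq_of_rank_eq hA
  let S := D.map (frobeniusEquiv K 2).symm
  have hS : S.map (· ^ 2) = D := by
    ext i j; exact frobeniusEquiv_symm_pow_p K 2 (D i j)
  refine ⟨Sᵀ.toMvPolynomial, E.toMvPolynomial, Sᵀ.toMvPolynomial_isHomogeneous,
    E.toMvPolynomial_isHomogeneous, ?_, ?_⟩
  · refine linearIndependent_toMvPolynomial_iff.mpr (LinearIndependent.of_sq ?_)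
    rwa [← hS] at hD
  · rw [← hS, sum_X_sq_mul_toMvPolynomial_mul]

end Matrix

theorem exists_isUnit_det_bind₁_toMvPolynomial_eq_X {n K : Type*} [Fintype n] [DecidableEq n]
    [Field K] {P : n → MvPolynomial n K} (hP : ∀ i, (P i).IsHomogeneous 1)
    (hli : LinearIndependent K P) :
    ∃ g : Matrix n n K, IsUnit g.det ∧ ∀ i, bind₁ g.toMvPolynomial (P i) = X i := by
  obtain ⟨B, rfl⟩ := Matrix.exists_toMvPolynomial_eq hP
  have hB : IsUnit B.det := B.isUnit_iff_isUnit_det.mp <|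
    Matrix.linearIndependent_rows_iff_isUnit.mp (Matrix.linearIndependent_toMvPolynomial_iff.mp hli)
  refine ⟨B⁻¹, B.isUnit_nonsing_inv_det hB, fun i => ?_⟩
  rw [← Matrix.toMvPolynomial_mul, B.mul_nonsing_inv hB, Matrix.toMvPolynomial_one]

/-- rank-two case in four variables over an algebraically closed field of
characteristic 2: `f = Σ xᵢ²Lᵢ` with coefficient matrix of rank 2 can be written as
`M₁²N₁ + M₂²N₂` with `M₁, M₂` independent linear forms; and whenever `M₁,M₂,N₁,N₂` are
linearly independent, `f` is linearly equivalent to `x₁²x₃ + x₂²x₄`. -/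
theorem rank_two_quaternary_cubic
    (k : Type*) [Field k] [IsAlgClosed k] [CharP k 2]
    (A : Matrix (Fin 4) (Fin 4) k) (L : Fin 4 → MvPolynomial (Fin 4) k)
    (hL : ∀ i, L i = ∑ j, C (A i j) * X j)
    (hrank : A.rank = 2)
    (f : MvPolynomial (Fin 4) k) (hf : f = ∑ i, X i ^ 2 * L i) :
    (∃ M₁ M₂ N₁ N₂ : MvPolynomial (Fin 4) k,
      M₁.IsHomogeneous 1 ∧ M₂.IsHomogeneous 1 ∧ N₁.IsHomogeneous 1 ∧ N₂.IsHomogeneous 1 ∧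
      LinearIndependent k ![M₁, M₂] ∧ f = M₁ ^ 2 * N₁ + M₂ ^ 2 * N₂) ∧
    (∀ M₁ M₂ N₁ N₂ : MvPolynomial (Fin 4) k,
      M₁.IsHomogeneous 1 → M₂.IsHomogeneous 1 → N₁.IsHomogeneous 1 → N₂.IsHomogeneous 1 →
      f = M₁ ^ 2 * N₁ + M₂ ^ 2 * N₂ →
      LinearIndependent k ![M₁, M₂, N₁, N₂] →
      ∃ g : Matrix (Fin 4) (Fin 4) k, IsUnit g.det ∧
        aeval (fun s => ∑ t, C (g s t) * X t) f = X 0 ^ 2 * X 2 + X 1 ^ 2 * X 3) := by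
  have hLA : L = A.toMvPolynomial := _root_.funext fun i =>
    (hL i).trans (A.toMvPolynomial_eq_sum_C_mul_X i).symm
  subst hLA
  refine ⟨?_, fun M₁ M₂ N₁ N₂ h₁ h₂ h₃ h₄ hMN hli => ?_⟩
  · obtain ⟨M, N, hM, hN, hli, hMN⟩ := A.exists_linearIndependent_sq_mul_of_rank_eq hrank
    refine ⟨M 0, M 1, N 0, N 1, hM 0, hM 1, hN 0, hN 1, ?_, ?_⟩
    · convert hli
      ext i; fin_cases i <;> rfl
    · rw [hf, hMN, Fin.sum_univ_two]
  · obtain ⟨g, hg, hgX⟩ := exists_isUnit_det_bind₁_toMvPolynomial_eq_X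
      (P := ![M₁, M₂, N₁, N₂]) (fun i => by fin_cases i <;> assumption) hli
    refine ⟨g, hg, ?_⟩
    have hsubst : (fun s => ∑ t, C (g s t) * X t) = g.toMvPolynomial :=
      _root_.funext fun s => (g.toMvPolynomial_eq_sum_C_mul_X s).symm
    obtain ⟨e₁, e₂, e₃, e₄⟩ : bind₁ g.toMvPolynomial M₁ = X 0 ∧ bind₁ g.toMvPolynomial M₂ = X 1 ∧
        bind₁ g.toMvPolynomial N₁ = X 2 ∧ bind₁ g.toMvPolynomial N₂ = X 3 :=
      ⟨hgX 0, hgX 1, hgX 2, hgX 3⟩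
    rw [hsubst, hMN, ← bind₁, map_add, map_mul, map_mul, map_pow, map_pow, e₁, e₂, e₃, e₄]
end
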